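/- Let f : ℝⁿ → ℝⁿ be continuously differentiable on a neighborhood of x* with f(x*) = 0, and let (M_k) be a sequence of invertible n×n real matrices such that for some constants c < 1 and β > 0 one has ‖I − M_k⁻¹ f'(x*)‖ ≤ c and ‖M_k⁻¹‖ ≤ β for all k (operator norms). Then for every c' with c < c' < 1 there exists δ > 0 such that whenever ‖x₀ − x*‖ ≤ δ, the iterates x_{k+1} = x_k − M_k⁻¹ f(x_k) satisfy ‖x_{k+1} − x*‖ ≤ c' ‖x_k − x*‖ for all k, and consequently x_k → x*. -/

import Mathlib

/-!
Write `y - a = h` and `A = M_k⁻¹`. Since `f a = 0`, one step of the iteration sends `h` to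
`(I - A J) h - A (f y - f a - J h)`. The first term is at most `c ‖h‖`, and by Fréchet
differentiability at `a` the second is at most `β ε ‖h‖` on a small ball, so choosing
`β ε < c' - c` makes every step a `c'`-contraction towards `a` that keeps the iterates in the
ball; the errors then decay geometrically.
-/

open Filter Topology

section Contraction

variable {E : Type*} [SeminormedAddCommGroup E] {x : ℕ → E} {a : E} {q : ℝ}

theorem norm_sub_le_pow_mul_of_norm_succ_sub_le (hq : 0 ≤ q)
    (h : ∀ k, ‖x (k + 1) - a‖ ≤ q * ‖x k - a‖) (k : ℕ) :
    ‖x k - a‖ ≤ q ^ k * ‖x 0 - a‖ := by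
  induction k with
  | zero => simp
  | succ k ih =>
    calc ‖x (k + 1) - a‖ ≤ q * ‖x k - a‖ := h k
      _ ≤ q * (q ^ k * ‖x 0 - a‖) := by gcongr
      _ = q ^ (k + 1) * ‖x 0 - a‖ := by ring

theorem tendsto_of_norm_succ_sub_le_mul (hq₀ : 0 ≤ q) (hq₁ : q < 1)
    (h : ∀ k, ‖x (k + 1) - a‖ ≤ q * ‖x k - a‖) : Tendsto x atTop (𝓝 a) := by
  rw [tendsto_iff_norm_sub_tendsto_zero]
  refine squeeze_zero (fun _ => norm_nonneg _) (norm_sub_le_pow_mul_of_norm_succ_sub_le hq₀ h) ?_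
  simpa using (tendsto_pow_atTop_nhds_zero_of_lt_one hq₀ hq₁).mul_const ‖x 0 - a‖

theorem norm_succ_sub_le_mul_of_forall_closedBall {g : ℕ → E → E} {δ : ℝ} (hq : q ≤ 1)
    (hg : ∀ k y, ‖y - a‖ ≤ δ → ‖g k y - a‖ ≤ q * ‖y - a‖)
    (hx₀ : ‖x 0 - a‖ ≤ δ) (hx : ∀ k, x (k + 1) = g k (x k)) (k : ℕ) :
    ‖x (k + 1) - a‖ ≤ q * ‖x k - a‖ := by
  have hball : ∀ k, ‖x k - a‖ ≤ δ := by
    intro k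
    induction k with
    | zero => exact hx₀
    | succ k ih =>
      rw [hx k]
      exact (hg k _ ih).trans ((mul_le_of_le_one_left (norm_nonneg _) hq).trans ih)
  rw [hx k]
  exact hg k _ (hball k)

end Contraction

section Preconditioned

variable {𝕜 E F : Type*} [NontriviallyNormedField 𝕜] [SeminormedAddCommGroup E]
  [NormedSpace 𝕜 E] [SeminormedAddCommGroup F] [NormedSpace 𝕜 F] {f : E → F} {a : E}

theorem norm_sub_apply_sub_le (A : F →L[𝕜] E) (J : E →L[𝕜] F) (hfa : f a = 0) (y : E) :
    ‖y - A (f y) - a‖ ≤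
      ‖ContinuousLinearMap.id 𝕜 E - A.comp J‖ * ‖y - a‖ + ‖A‖ * ‖f y - f a - J (y - a)‖ := by
  have hsplit : y - A (f y) - a =
      (ContinuousLinearMap.id 𝕜 E - A.comp J) (y - a) - A (f y - f a - J (y - a)) := by
    simp only [sub_apply, ContinuousLinearMap.id_apply,
      ContinuousLinearMap.comp_apply, map_sub, hfa, map_zero]
    abel
  rw [hsplit]
  exact (norm_sub_le _ _).trans (add_le_add (ContinuousLinearMap.le_opNorm _ _)
    (ContinuousLinearMap.le_opNorm _ _))

theorem HasFDerivAt.eventually_norm_sub_apply_sub_le {J : E →L[𝕜] F} (hf : HasFDerivAt f J a)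
    (hfa : f a = 0) {A : ℕ → F →L[𝕜] E} {c β c' : ℝ}
    (hc : ∀ k, ‖ContinuousLinearMap.id 𝕜 E - (A k).comp J‖ ≤ c) (hβ : ∀ k, ‖A k‖ ≤ β)
    (hcc' : c < c') :
    ∀ᶠ y in 𝓝 a, ∀ k, ‖y - A k (f y) - a‖ ≤ c' * ‖y - a‖ := by
  obtain ⟨ε, hε, hβε⟩ := exists_pos_mul_lt (sub_pos.2 hcc') β
  filter_upwards [hf.isLittleO.def hε] with y hy k
  calc ‖y - A k (f y) - a‖
      ≤ ‖ContinuousLinearMap.id 𝕜 E - (A k).comp J‖ * ‖y - a‖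
        + ‖A k‖ * ‖f y - f a - J (y - a)‖ := norm_sub_apply_sub_le (A k) J hfa y
    _ ≤ c * ‖y - a‖ + β * (ε * ‖y - a‖) := by
        gcongr
        · exact hc k
        · exact (norm_nonneg _).trans (hβ 0)
        · exact hβ k
    _ ≤ c' * ‖y - a‖ := by nlinarith [norm_nonneg (y - a)]

end Preconditioned

theorem preconditioned_iteration_local_linear_convergence_general
    (n : ℕ) (f : EuclideanSpace ℝ (Fin n) → EuclideanSpace ℝ (Fin n))
    (xstar : EuclideanSpace ℝ (Fin n)) (hf0 : f xstar = 0)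
    (s : Set (EuclideanSpace ℝ (Fin n))) (hs : s ∈ nhds xstar)
    (J' : EuclideanSpace ℝ (Fin n) →
      (EuclideanSpace ℝ (Fin n) →L[ℝ] EuclideanSpace ℝ (Fin n)))
    (hderiv : ∀ x ∈ s, HasFDerivAt f (J' x) x)
    (M : ℕ → Matrix (Fin n) (Fin n) ℝ)
    (c β : ℝ)
    (hMc : ∀ k, ‖ContinuousLinearMap.id ℝ (EuclideanSpace ℝ (Fin n)) -
        (Matrix.toEuclideanCLM (𝕜 := ℝ) (M k)⁻¹).comp (J' xstar)‖ ≤ c)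
    (hMβ : ∀ k, ‖(Matrix.toEuclideanCLM (𝕜 := ℝ) (M k)⁻¹ :
        EuclideanSpace ℝ (Fin n) →L[ℝ] EuclideanSpace ℝ (Fin n))‖ ≤ β) :
    ∀ c' : ℝ, c < c' → c' < 1 → ∃ δ > (0 : ℝ),
      ∀ x : ℕ → EuclideanSpace ℝ (Fin n), ‖x 0 - xstar‖ ≤ δ →
        (∀ k, x (k + 1) = x k - Matrix.toEuclideanCLM (𝕜 := ℝ) (M k)⁻¹ (f (x k))) →
        (∀ k, ‖x (k + 1) - xstar‖ ≤ c' * ‖x k - xstar‖) ∧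
          Filter.Tendsto x Filter.atTop (nhds xstar) := by
  intro c' hcc' hc'1
  have hc'0 : 0 ≤ c' := ((norm_nonneg _).trans (hMc 0)).trans hcc'.le
  obtain ⟨δ, hδ, hstep⟩ := Metric.nhds_basis_closedBall.eventually_iff.mp
    ((hderiv xstar (mem_of_mem_nhds hs)).eventually_norm_sub_apply_sub_le hf0 hMc hMβ hcc')
  refine ⟨δ, hδ, fun x hx0 hx => ?_⟩
  have hcontract := norm_succ_sub_le_mul_of_forall_closedBall hc'1.le
    (fun k y hy => hstep (mem_closedBall_iff_norm.2 hy) k) hx0 hx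
  exact ⟨hcontract, tendsto_of_norm_succ_sub_le_mul hc'0 hc'1 hcontract⟩

/-- Local q-linear convergence of the preconditioned iteration:
if `f` is continuously differentiable on a neighborhood of a root `x*`, and the
invertible preconditioners `M_k` satisfy `‖I − M_k⁻¹ f'(x*)‖ ≤ c < 1` and
`‖M_k⁻¹‖ ≤ β` uniformly, then for every `c' ∈ (c, 1)` there is `δ > 0` such that
iterates starting with `‖x₀ − x*‖ ≤ δ` satisfy
`‖x_{k+1} − x*‖ ≤ c' ‖x_k − x*‖` for all `k`, and hence `x_k → x*`. -/
theorem preconditioned_iteration_local_linear_convergence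
    (n : ℕ) (f : EuclideanSpace ℝ (Fin n) → EuclideanSpace ℝ (Fin n))
    (xstar : EuclideanSpace ℝ (Fin n)) (hf0 : f xstar = 0)
    (s : Set (EuclideanSpace ℝ (Fin n))) (hs : s ∈ nhds xstar)
    (J' : EuclideanSpace ℝ (Fin n) →
      (EuclideanSpace ℝ (Fin n) →L[ℝ] EuclideanSpace ℝ (Fin n)))
    (hderiv : ∀ x ∈ s, HasFDerivAt f (J' x) x)
    (hcont : ContinuousOn J' s)
    (M : ℕ → Matrix (Fin n) (Fin n) ℝ) (hM : ∀ k, IsUnit (M k))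
    (c β : ℝ) (hc : c < 1) (hβ : 0 < β)
    (hMc : ∀ k, ‖ContinuousLinearMap.id ℝ (EuclideanSpace ℝ (Fin n)) -
        (Matrix.toEuclideanCLM (𝕜 := ℝ) (M k)⁻¹).comp (J' xstar)‖ ≤ c)
    (hMβ : ∀ k, ‖(Matrix.toEuclideanCLM (𝕜 := ℝ) (M k)⁻¹ :
        EuclideanSpace ℝ (Fin n) →L[ℝ] EuclideanSpace ℝ (Fin n))‖ ≤ β) :
    ∀ c' : ℝ, c < c' → c' < 1 → ∃ δ > (0 : ℝ),
      ∀ x : ℕ → EuclideanSpace ℝ (Fin n), ‖x 0 - xstar‖ ≤ δ →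
        (∀ k, x (k + 1) = x k - Matrix.toEuclideanCLM (𝕜 := ℝ) (M k)⁻¹ (f (x k))) →
        (∀ k, ‖x (k + 1) - xstar‖ ≤ c' * ‖x k - xstar‖) ∧
          Filter.Tendsto x Filter.atTop (nhds xstar) :=
  preconditioned_iteration_local_linear_convergence_general n f xstar hf0 s hs J' hderiv M c β hMc
    hMβ
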